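/- arXiv:2412.13926 — 3 statements merged into one kernel-verified Lean document; each statement's English description precedes it below -/
import Mathlib

section
/- Let G be a finite group acting on a module M over a finite field, and q a prime dividing |G/C_G(M)|. If for every nonzero v ∈ M the stabilizer C_G(v) contains a Sylow q-subgroup of G as a normal subgroup, then (|M|-1)/(|C_M(Q)|-1) equals the number of Sylow q-subgroups of G, where Q is a Sylow q-subgroup of G. -/
open Pointwise

/-- The stabilizer of a vector under a linear action given by `ρ`. -/
def linStab {F M : Type*} [Field F] [AddCommGroup M] [Module F M]
    (G : Type*) [Group G] (ρ : G →* (M ≃ₗ[F] M)) (v : M) : Subgroup G where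
  carrier := {g | ρ g v = v}
  one_mem' := by simp
  mul_mem' := by
    intro a b ha hb
    simp only [Set.mem_setOf_eq, map_mul] at *
    show ρ a (ρ b v) = v
    rw [hb, ha]
  inv_mem' := by
    intro a ha
    simp only [Set.mem_setOf_eq] at *
    calc (ρ a⁻¹) v = (ρ a⁻¹) ((ρ a) v) := by rw [ha]
    _ = (ρ a⁻¹ * ρ a) v := rfl
    _ = (ρ (a⁻¹ * a)) v := by rw [map_mul]
    _ = v := by simp

section Aux

variable {G F M : Type} [Group G] [Field F] [AddCommGroup M] [Module F M]

lemma rho_apply_apply (ρ : G →* (M ≃ₗ[F] M)) (a b : G) (m : M) :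
    ρ a (ρ b m) = ρ (a * b) m := by rw [map_mul]; rfl

lemma sylow_unique_of_le_stab [Finite G] (ρ : G →* (M ≃ₗ[F] M)) (q : ℕ) [Fact q.Prime]
    {v : M} {S T : Sylow q G} (hS : (S : Subgroup G) ≤ linStab G ρ v)
    (hnorm : ((S : Subgroup G).subgroupOf (linStab G ρ v)).Normal)
    (hT : (T : Subgroup G) ≤ linStab G ρ v) : T = S := by
  set H := linStab G ρ v with hH
  haveI : Unique (Sylow q H) :=
    Sylow.unique_of_normal (S.subtype hS) (by rw [Sylow.coe_subtype]; exact hnorm)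
  have h1 : T.subtype hT = S.subtype hS := Subsingleton.elim _ _
  have h2 : (T : Subgroup G).subgroupOf H = (S : Subgroup G).subgroupOf H := by
    have := congrArg (fun P : Sylow q H => (P : Subgroup H)) h1
    simpa [Sylow.coe_subtype] using this
  apply Sylow.ext
  have h3 := congrArg (fun K : Subgroup H => K.map H.subtype) h2
  simpa [Subgroup.subgroupOf_map_subtype, inf_eq_left.mpr hT, inf_eq_left.mpr hS] using h3

/-- conjugation bijection on nonzero fixed points -/
def conjFixEquiv (ρ : G →* (M ≃ₗ[F] M)) (g : G) (S : Subgroup G) :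
    {m : M // (∀ h ∈ S, ρ h m = m) ∧ m ≠ 0} ≃
      {m : M // (∀ h ∈ MulAut.conj g • S, ρ h m = m) ∧ m ≠ 0} where
  toFun m := ⟨ρ g m.1, by
    constructor
    · intro h hh
      rw [Subgroup.mem_pointwise_smul_iff_inv_smul_mem] at hh
      have h1 : g⁻¹ * h * g ∈ S := by
        simpa [MulAut.smul_def] using hh
      have h2 := m.2.1 _ h1
      have e : h * g = g * (g⁻¹ * h * g) := by group
      rw [rho_apply_apply, e, ← rho_apply_apply, h2]
    · intro h0
      exact m.2.2 ((ρ g).map_eq_zero_iff.mp h0)⟩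
  invFun m := ⟨ρ g⁻¹ m.1, by
    constructor
    · intro h hh
      have h1 : g * h * g⁻¹ ∈ MulAut.conj g • S := by
        have := Subgroup.smul_mem_pointwise_smul h (MulAut.conj g) S hh
        simpa [MulAut.smul_def] using this
      have h2 := m.2.1 _ h1
      have e : h * g⁻¹ = g⁻¹ * (g * h * g⁻¹) := by group
      rw [rho_apply_apply, e, ← rho_apply_apply, h2]
    · intro h0
      exact m.2.2 ((ρ g⁻¹).map_eq_zero_iff.mp h0)⟩
  left_inv m := Subtype.ext (by show ρ g⁻¹ (ρ g m.1) = m.1; rw [rho_apply_apply]; simp)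
  right_inv m := Subtype.ext (by show ρ g (ρ g⁻¹ m.1) = m.1; rw [rho_apply_apply]; simp)

end Aux

/-- if `(G, M)` satisfies `N_q`, then `(|M|-1)/(|C_M(Q)|-1)`
equals the number of Sylow `q`-subgroups of `G`. -/
theorem card_sub_one_div_card_fixed_sub_one_eq_card_sylow
    (G F M : Type) [Group G] [Finite G] [Field F] [Finite F]
    [AddCommGroup M] [Module F M] [Finite M]
    (ρ : G →* (M ≃ₗ[F] M)) (q : ℕ) [Fact q.Prime]
    (hq : q ∣ (MonoidHom.ker ρ).index)
    (hNq : ∀ v : M, v ≠ 0 → ∃ S : Sylow q G,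
      (S : Subgroup G) ≤ linStab G ρ v ∧
        ((S : Subgroup G).subgroupOf (linStab G ρ v)).Normal)
    (Q : Sylow q G) :
    (Nat.card M - 1) /
        (Nat.card {m : M // ∀ g ∈ (Q : Subgroup G), ρ g m = m} - 1)
      = Nat.card (Sylow q G) := by
  classical
  have hM : Nontrivial M := by
    rcases subsingleton_or_nontrivial M with h | h
    · exfalso
      have hker : MonoidHom.ker ρ = ⊤ := by
        ext g
        simp only [Subgroup.mem_top, iff_true, MonoidHom.mem_ker]
        exact LinearEquiv.toLinearMap_injective
          (LinearMap.ext fun m => Subsingleton.elim _ _)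
      rw [hker, Subgroup.index_top] at hq
      exact (Fact.out : q.Prime).one_lt.ne' (Nat.dvd_one.mp hq)
    · exact h
  haveI : Fintype M := Fintype.ofFinite M
  haveI : Fintype (Sylow q G) := Fintype.ofFinite _
  have key : ∀ v : M, v ≠ 0 → ∃! S : Sylow q G, (S : Subgroup G) ≤ linStab G ρ v := by
    intro v hv
    obtain ⟨S, hS, hn⟩ := hNq v hv
    exact ⟨S, hS, fun T hT => sylow_unique_of_le_stab ρ q hS hn hT⟩
  let f : {v : M // v ≠ 0} → Sylow q G := fun v => (key v.1 v.2).choose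
  have hf : ∀ v : {v : M // v ≠ 0}, ((f v : Subgroup G)) ≤ linStab G ρ v.1 :=
    fun v => (key v.1 v.2).choose_spec.1
  have hf2 : ∀ (v : {v : M // v ≠ 0}) (T : Sylow q G),
      (T : Subgroup G) ≤ linStab G ρ v.1 → f v = T :=
    fun v T hT => ((key v.1 v.2).choose_spec.2 T hT).symm
  have fiberEquiv : ∀ S : Sylow q G,
      {v : {v : M // v ≠ 0} // f v = S} ≃
        {m : M // (∀ g ∈ (S : Subgroup G), ρ g m = m) ∧ m ≠ 0} := by
    intro S
    refine ⟨fun v => ⟨v.1.1, ⟨fun g hg => ?_, v.1.2⟩⟩,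
      fun m => ⟨⟨m.1, m.2.2⟩, hf2 ⟨m.1, m.2.2⟩ S fun g hg => m.2.1 g hg⟩, ?_, ?_⟩
    · have h := hf v
      rw [v.2] at h
      exact h hg
    · intro v; exact Subtype.ext (Subtype.ext rfl)
    · intro m; exact Subtype.ext rfl
  have hfc : ∀ S : Sylow q G,
      Fintype.card {m : M // (∀ g ∈ (S : Subgroup G), ρ g m = m) ∧ m ≠ 0}
        = Fintype.card {m : M // (∀ g ∈ (Q : Subgroup G), ρ g m = m) ∧ m ≠ 0} := by
    intro S
    obtain ⟨g, hg⟩ := MulAction.exists_smul_eq G S Q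
    have hQ : (Q : Subgroup G) = MulAut.conj g • (S : Subgroup G) := by
      rw [← hg]; rfl
    rw [hQ]
    exact Fintype.card_congr (conjFixEquiv ρ g S)
  have hsum : Fintype.card {v : M // v ≠ 0}
      = Fintype.card (Sylow q G) *
        Fintype.card {m : M // (∀ g ∈ (Q : Subgroup G), ρ g m = m) ∧ m ≠ 0} := by
    rw [← Fintype.card_congr (Equiv.sigmaFiberEquiv f), Fintype.card_sigma]
    rw [Finset.sum_congr rfl (fun S _ => (Fintype.card_congr (fiberEquiv S)).trans (hfc S)),
      Finset.sum_const, Finset.card_univ, smul_eq_mul]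
  have hM1 : Fintype.card {v : M // v ≠ 0}
      = Fintype.card M - 1 := by
    rw [Fintype.card_subtype_compl (fun v : M => v = 0), Fintype.card_subtype_eq]
  have h0T : ∀ g ∈ (Q : Subgroup G), ρ g (0 : M) = 0 := fun g _ => map_zero (ρ g)
  have eT : {m : M // (∀ g ∈ (Q : Subgroup G), ρ g m = m) ∧ m ≠ 0}
      ≃ {x : {m : M // ∀ g ∈ (Q : Subgroup G), ρ g m = m} //
          ¬ (x = (⟨0, h0T⟩ : {m : M // ∀ g ∈ (Q : Subgroup G), ρ g m = m}))} :=
    ⟨fun m => ⟨⟨m.1, m.2.1⟩, fun h => m.2.2 (congrArg Subtype.val h)⟩,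
     fun x => ⟨x.1.1, x.1.2, fun h => x.2 (Subtype.ext h)⟩,
     fun m => Subtype.ext rfl, fun x => Subtype.ext (Subtype.ext rfl)⟩
  have hT1 : Fintype.card {m : M // (∀ g ∈ (Q : Subgroup G), ρ g m = m) ∧ m ≠ 0}
      = Fintype.card {m : M // ∀ g ∈ (Q : Subgroup G), ρ g m = m} - 1 := by
    rw [Fintype.card_congr eT, Fintype.card_subtype_compl
      (fun x : {m : M // ∀ g ∈ (Q : Subgroup G), ρ g m = m} => x = ⟨0, h0T⟩),
      Fintype.card_subtype_eq]
  set c := Fintype.card {m : M // (∀ g ∈ (Q : Subgroup G), ρ g m = m) ∧ m ≠ 0} with hc_def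
  have hc : 0 < c := by
    rcases Nat.eq_zero_or_pos c with h | h
    · exfalso
      have h2 : Fintype.card M - 1 = 0 := by rw [← hM1, hsum, h, Nat.mul_zero]
      have h3 : 1 < Fintype.card M := Fintype.one_lt_card_iff_nontrivial.mpr hM
      omega
    · exact h
  rw [Nat.card_eq_fintype_card, Nat.card_eq_fintype_card, Nat.card_eq_fintype_card,
    ← hT1, ← hM1, hsum, Nat.mul_div_cancel _ hc]
end

section
/- Let G be a generalized quaternion group of order 2^k with k ≥ 3. Then the set cod(G|G') of codegrees of nonlinear irreducible characters of G has exactly one element if and only if k = 3 (i.e., G ≅ Q_8). -/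
open CategoryTheory

noncomputable def repKer (G : Type) [Group G] (V : FDRep ℂ G) : Subgroup G :=
  MonoidHom.ker (Representation.asGroupHom V.ρ)

noncomputable def cod (G : Type) [Group G] (V : FDRep ℂ G) : ℕ :=
  (repKer G V).index / Module.finrank ℂ V

noncomputable def ncodSet (G : Type) [Group G] : Set ℕ :=
  { n | ∃ V : FDRep ℂ G, Simple V ∧ 1 < Module.finrank ℂ V ∧ cod G V = n }

def StarGroup (G : Type) [Group G] : Prop :=
  ∃ m n : ℕ, m ≠ n ∧ Nat.Coprime m n ∧ ncodSet G = {m, n}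

structure IsFrobeniusWith (G : Type) [Group G] (N H : Subgroup G) : Prop where
  normal : N.Normal
  compl : N.IsComplement' H
  N_ne_bot : N ≠ ⊥
  H_ne_bot : H ≠ ⊥
  frob : ∀ h ∈ H, h ≠ 1 → ∀ n ∈ N, n ≠ 1 → h * n ≠ n * h

def IsFrobenius (G : Type) [Group G] : Prop :=
  ∃ N H : Subgroup G, IsFrobeniusWith G N H

def IsMinimalNormal (G : Type) [Group G] (N : Subgroup G) : Prop :=
  N.Normal ∧ N ≠ ⊥ ∧ ∀ M : Subgroup G, M.Normal → M ≠ ⊥ → M ≤ N → M = N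

def Is2FrobeniusWith (G : Type) [Group G] (K H : Subgroup G) [K.Normal] : Prop :=
  ⊥ < K ∧ K < H ∧ H < ⊤ ∧
    (∃ R : Subgroup (G ⧸ K), IsFrobeniusWith (G ⧸ K) (H.map (QuotientGroup.mk' K)) R) ∧
    (∃ J : Subgroup H, IsFrobeniusWith H (K.subgroupOf H) J)

def Is2Frobenius (G : Type) [Group G] : Prop :=
  ∃ (K H : Subgroup G) (hK : K.Normal) (_ : H.Normal), @Is2FrobeniusWith G _ K H hK

/-!
Write `Q = QuaternionGroup n`, of order `4n`. Every additive character `ψ` of `ZMod (2n)` gives a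
two-dimensional representation of `Q` (induced from `⟨a⟩`), irreducible as soon as
`ψ 1 ≠ ψ (-1)`, with kernel `{a i | ψ i = 1}`. A faithful `ψ` gives codegree `4n / 2 = 2n`,
and `i ↦ ψ (2i)` gives kernel `{1, a n}` and codegree `n`; for `n ≥ 3` both occur.

For `Q₈` every irreducible representation has dimension at most two, since the span of an
eigenvector `v` of `a 1` and of `xa 0 • v` is invariant. A nonlinear one is faithful: a nontrivial
kernel contains `a 2`, all commutators lie in `{1, a 2}`, and a representation with abelian image
has dimension one by Schur's lemma. So every nonlinear codegree of `Q₈` is `8 / 2 = 4`.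
-/

open Matrix

section Irreducible

variable {k G V : Type*} [Field k] [Monoid G] [AddCommGroup V] [Module k V]
  {ρ : Representation k G V}

theorem Representation.IsIrreducible.nontrivial (hρ : ρ.IsIrreducible) : Nontrivial V := by
  by_contra h
  rw [not_nontrivial_iff_subsingleton] at h
  exact bot_ne_top (α := Subrepresentation ρ)
    (Subrepresentation.toSubmodule_injective (Subsingleton.elim _ _))

theorem Representation.IsIrreducible.eq_top_of_invariant (hρ : ρ.IsIrreducible)
    (p : Submodule k V) (hp : ∀ g, ∀ v ∈ p, ρ g v ∈ p) (hne : p ≠ ⊥) : p = ⊤ :=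
  congrArg Subrepresentation.toSubmodule <|
    (hρ.eq_bot_or_eq_top ⟨p, fun g v hv => hp g v hv⟩).resolve_left
      fun h => hne (congrArg Subrepresentation.toSubmodule h)

theorem Representation.IsIrreducible.finrank_eq_one_of_commute [IsAlgClosed k]
    [FiniteDimensional k V] (hρ : ρ.IsIrreducible) (hcomm : ∀ g h, Commute (ρ g) (ρ h)) :
    Module.finrank k V = 1 := by
  have := hρ.nontrivial
  obtain ⟨v, hv⟩ := exists_ne (0 : V)
  have hscalar (g : G) : ∃ c : k, c • v = ρ g v := by
    let f : ρ.IntertwiningMap ρ := ⟨ρ g, fun h => (hcomm g h).eq⟩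
    have hid : Representation.IntertwiningMap.id ρ ≠ 0 := fun h => hv congr($h v)
    have := hρ
    obtain ⟨c, hc⟩ := (finrank_eq_one_iff_of_nonzero' _ hid).mp
      (Representation.IsIrreducible.finrank_intertwiningMap_self ρ) f
    exact ⟨c, congr($hc v)⟩
  have hline := hρ.eq_top_of_invariant (k ∙ v) (fun g w hw => by
      obtain ⟨a, rfl⟩ := Submodule.mem_span_singleton.mp hw
      obtain ⟨c, hc⟩ := hscalar g
      rw [map_smul, ← hc, smul_smul]
      exact Submodule.mem_span_singleton.mpr ⟨a * c, rfl⟩)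
    (by simpa [Submodule.span_singleton_eq_bot] using hv)
  rw [← finrank_top, ← hline, finrank_span_singleton hv]

end Irreducible

universe u

namespace FDRep

variable {k G : Type u} [Field k] [Monoid G]

theorem injective_of_mono {X Y : FDRep k G} (f : X ⟶ Y) [Mono f] : Function.Injective f := by
  have : Mono f.hom := (inferInstance : Mono ((Action.forget (FGModuleCat k) G).map f))
  have : Mono ((forget₂ (FGModuleCat k) (ModuleCat k)).map f.hom) := inferInstance
  exact (ModuleCat.mono_iff_injective _).mp this

theorem isIso_of_bijective {X Y : FDRep k G} (f : X ⟶ Y) (hf : Function.Bijective f) :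
    IsIso f := by
  have : IsIso ((forget (FGModuleCat k)).map f.hom) := (isIso_iff_bijective _).mpr hf
  have : IsIso f.hom := isIso_of_reflects_iso f.hom (forget (FGModuleCat k))
  exact Action.isIso_of_hom_isIso f

noncomputable def subtype {X : FDRep k G} (W : Subrepresentation X.ρ) :
    FDRep.of W.toRepresentation ⟶ X where
  hom := FGModuleCat.ofHom W.toSubmodule.subtype
  comm _ := rfl

instance {X : FDRep k G} (W : Subrepresentation X.ρ) : Mono (subtype W) :=
  ConcreteCategory.mono_of_injective _ Subtype.val_injective

theorem eq_bot_of_subtype_eq_zero {X : FDRep k G} {W : Subrepresentation X.ρ}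
    (h : subtype W = 0) : W = ⊥ := by
  refine Subrepresentation.toSubmodule_injective ((Submodule.eq_bot_iff _).mpr fun w hw => ?_)
  change subtype W ⟨w, hw⟩ = 0
  rw [h]
  rfl

theorem simple_iff_isIrreducible (V : FDRep k G) :
    Simple V ↔ Representation.IsIrreducible V.ρ := by
  constructor
  · intro hV
    refine
      { exists_pair_ne := ⟨⊥, ⊤, fun h => id_nonzero V ?_⟩
        eq_bot_or_eq_top := fun W => ?_ }
    · ext v
      exact (h ▸ trivial : v ∈ (⊥ : Subrepresentation V.ρ))
    · by_cases h : subtype W = 0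
      · exact Or.inl (eq_bot_of_subtype_eq_zero h)
      · have := isIso_of_mono_of_nonzero h
        refine Or.inr (Subrepresentation.toSubmodule_injective
          (Submodule.eq_top_iff'.mpr fun v => ?_))
        rw [← show subtype W (inv (subtype W) v) = v by simp]
        exact (inv (subtype W) v).2
  · intro hV
    have := hV.nontrivial
    refine ⟨fun {Y} f _ => ⟨fun _ h0 => ?_,
      fun h0 => isIso_of_bijective f ⟨injective_of_mono f, ?_⟩⟩⟩
    · obtain ⟨v, hv⟩ := exists_ne (0 : V)
      subst h0
      exact hv ((show (0 : Y ⟶ V) (inv (0 : Y ⟶ V) v) = v by simp).symm.trans rfl)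
    · intro v
      let R := ((forget₂ (FDRep k G) (Rep k G)).map f).hom.range
      obtain hR | hR := hV.eq_bot_or_eq_top R
      · refine absurd ?_ h0
        ext y
        exact (hR ▸ ⟨y, rfl⟩ : f y ∈ (⊥ : Subrepresentation V.ρ))
      · exact (hR ▸ trivial : v ∈ R)

end FDRep

theorem mem_repKer_iff {G : Type} [Group G] (V : FDRep ℂ G) (g : G) :
    g ∈ repKer G V ↔ V.ρ g = 1 := by
  rw [repKer, MonoidHom.mem_ker, Units.ext_iff, Representation.asGroupHom_apply]
  rfl

theorem ZMod.natCast_ne_neg_natCast {N m : ℕ} (hm : 0 < m) (hmN : 2 * m < N) :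
    (m : ZMod N) ≠ -m := by
  intro h
  have h2m : ((2 * m : ℕ) : ZMod N) = 0 := by
    push_cast
    linear_combination h
  rw [ZMod.natCast_eq_zero_iff] at h2m
  exact absurd (Nat.le_of_dvd (by omega) h2m) (by omega)

theorem ZMod.two_mul_eq_zero_iff {n : ℕ} [NeZero n] (i : ZMod (2 * n)) :
    2 * i = 0 ↔ i = 0 ∨ i = n := by
  obtain ⟨m, hm, rfl⟩ : ∃ m < 2 * n, (m : ZMod (2 * n)) = i :=
    ⟨i.val, i.val_lt, i.natCast_zmod_val⟩
  constructor
  · intro h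
    obtain ⟨c, rfl⟩ : n ∣ m := by
      have h2m : ((2 * m : ℕ) : ZMod (2 * n)) = 0 := by exact_mod_cast h
      rw [ZMod.natCast_eq_zero_iff] at h2m
      exact (Nat.mul_dvd_mul_iff_left two_pos).mp h2m
    have hc : c < 2 := lt_of_mul_lt_mul_left (by linarith) (Nat.zero_le n)
    interval_cases c <;> simp
  · rintro (h | h) <;> rw [h]
    · exact mul_zero 2
    · exact_mod_cast ZMod.natCast_self (2 * n)

theorem ZMod.stdAddChar_eq_one_iff {N : ℕ} [NeZero N] (i : ZMod N) :
    stdAddChar i = 1 ↔ i = 0 := by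
  rw [← AddChar.map_zero_eq_one (stdAddChar (N := N)), injective_stdAddChar.eq_iff]

namespace QuaternionGroup

theorem natCast_add_self {n : ℕ} : (n : ZMod (2 * n)) + n = 0 := by
  rw [← two_mul]
  exact_mod_cast ZMod.natCast_self (2 * n)

theorem finrank_le_two {k V : Type*} [Field k] [IsAlgClosed k] [AddCommGroup V] [Module k V]
    [FiniteDimensional k V] {n : ℕ} [NeZero n] {ρ : Representation k (QuaternionGroup n) V}
    (hρ : ρ.IsIrreducible) : Module.finrank k V ≤ 2 := by
  have := hρ.nontrivial
  obtain ⟨μ, hμ⟩ := Module.End.exists_eigenvalue (ρ (a 1))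
  obtain ⟨v, hv⟩ := hμ.exists_hasEigenvector
  have ha (i : ZMod (2 * n)) : ρ (a i) v = μ ^ i.val • v := by
    rw [← hv.pow_apply, ← map_pow, a_one_pow, ZMod.natCast_zmod_val]
  set p := Submodule.span k (Set.range ![v, ρ (xa 0) v])
  have hv₀ : v ∈ p := Submodule.subset_span ⟨0, rfl⟩
  have hv₁ : ρ (xa 0) v ∈ p := Submodule.subset_span ⟨1, rfl⟩
  have hmem (g : QuaternionGroup n) : ρ g v ∈ p := by
    rcases g with i | i
    · rw [ha]
      exact p.smul_mem _ hv₀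
    · rw [← zero_add i, ← xa_mul_a, map_mul, Module.End.mul_apply, ha, map_smul]
      exact p.smul_mem _ hv₁
  have hinv (g : QuaternionGroup n) : ∀ w ∈ p, ρ g w ∈ p := by
    refine fun w hw => (Submodule.span_le (p := p.comap (ρ g))).mpr ?_ hw
    rintro _ ⟨j, rfl⟩
    fin_cases j
    · exact hmem g
    · change ρ g (ρ (xa 0) v) ∈ p
      rw [← Module.End.mul_apply, ← map_mul]
      exact hmem _
  have htop := hρ.eq_top_of_invariant p hinv
    (fun h => hv.2 ((Submodule.eq_bot_iff p).mp h v hv₀))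
  calc Module.finrank k V = Module.finrank k p := by rw [htop, finrank_top]
    _ ≤ 2 := finrank_range_le_card _

section TwoDimRep

variable {n : ℕ}

-- Multiplicativity on `xa i * xa j = a (n + j - i)` uses `ψ n = ψ (-n)`, i.e. `natCast_add_self`.
def toMatrix {k : Type*} [CommRing k] (ψ : AddChar (ZMod (2 * n)) k) :
    QuaternionGroup n →* Matrix (Fin 2) (Fin 2) k where
  toFun
    | a i => !![ψ i, 0; 0, ψ (-i)]
    | xa i => !![0, ψ (-i); ψ (n + i), 0]
  map_one' := by
    rw [one_def]
    simp [Matrix.one_fin_two]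
  map_mul' := by
    have h := natCast_add_self (n := n)
    rintro (i | i) (j | j) <;>
      simp only [a_mul_a, a_mul_xa, xa_mul_a, xa_mul_xa, Matrix.mul_fin_two] <;>
      ext r c <;> fin_cases r <;> fin_cases c <;>
      simp only [Fin.isValue, Fin.mk_one, Fin.zero_eta, of_apply, cons_val', cons_val_zero,
        cons_val_one, cons_val_fin_one, mul_zero, zero_mul, add_zero, zero_add,
        ← AddChar.map_add_eq_mul] <;> congr 1 <;>
      first | ring1 | linear_combination -h

def twoDimRep {k : Type*} [CommRing k] (ψ : AddChar (ZMod (2 * n)) k) :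
    Representation k (QuaternionGroup n) (Fin 2 → k) :=
  (Matrix.toLinAlgEquiv' : Matrix (Fin 2) (Fin 2) k ≃ₐ[k] _).toRingEquiv.toMonoidHom.comp
    (toMatrix ψ)

theorem twoDimRep_eq_one_iff {k : Type*} [CommRing k] (ψ : AddChar (ZMod (2 * n)) k)
    (g : QuaternionGroup n) : twoDimRep ψ g = 1 ↔ toMatrix ψ g = 1 :=
  map_eq_one_iff _ Matrix.toLinAlgEquiv'.injective

variable {K : Type*} [Field K] (ψ : AddChar (ZMod (2 * n)) K)

theorem isIrreducible_twoDimRep (hψ : ψ 1 ≠ ψ (-1)) : (twoDimRep ψ).IsIrreducible := by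
  refine { exists_pair_ne := ⟨⊥, ⊤, fun h => ?_⟩, eq_bot_or_eq_top := fun W => ?_ }
  · have : (![1, 0] : Fin 2 → K) ∈ (⊥ : Subrepresentation (twoDimRep ψ)) := h ▸ trivial
    simpa using congrFun (show (![1, 0] : Fin 2 → K) = 0 from this) 0
  refine or_iff_not_imp_left.mpr fun hW => ?_
  have hmem (g : QuaternionGroup n) {v : Fin 2 → K} (hv : v ∈ W.toSubmodule) :
      toMatrix ψ g *ᵥ v ∈ W.toSubmodule :=
    W.apply_mem_toSubmodule g hv
  obtain ⟨v, hvW, hv⟩ : ∃ v ∈ W.toSubmodule, v ≠ 0 := by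
    by_contra! h
    exact hW (Subrepresentation.toSubmodule_injective ((Submodule.eq_bot_iff _).mpr h))
  have hψn : ψ n ≠ 0 := fun h => by simpa [h] using (ψ.map_add_eq_mul n (-n)).symm
  obtain ⟨c, hc, hcW⟩ : ∃ c : K, c ≠ 0 ∧ ![c, 0] ∈ W.toSubmodule := by
    by_cases hv0 : v 0 = 0
    · refine ⟨v 1, fun h => hv (funext fun i => by fin_cases i <;> simpa), ?_⟩
      convert hmem (xa 0) hvW using 1
      ext i; fin_cases i <;> simp [toMatrix, Matrix.mulVec, dotProduct, hv0]
    · refine ⟨(ψ 1 - ψ (-1)) * v 0, mul_ne_zero (sub_ne_zero.mpr hψ) hv0, ?_⟩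
      convert W.toSubmodule.sub_mem (hmem (a 1) hvW) (W.toSubmodule.smul_mem (ψ (-1)) hvW) using 1
      ext i; fin_cases i <;> simp [toMatrix, dotProduct, sub_mul]
  have hdW : ![0, c * ψ n] ∈ W.toSubmodule := by
    convert hmem (xa 0) hcW using 1
    ext i; fin_cases i <;> simp [toMatrix]
  refine Subrepresentation.toSubmodule_injective (Submodule.eq_top_iff'.mpr fun w => ?_)
  convert W.toSubmodule.add_mem (W.toSubmodule.smul_mem (w 0 / c) hcW)
    (W.toSubmodule.smul_mem (w 1 / (c * ψ n)) hdW) using 1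
  ext i; fin_cases i <;> simp [hc, hψn]

theorem toMatrix_a_eq_one_iff (i : ZMod (2 * n)) : toMatrix ψ (a i) = 1 ↔ ψ i = 1 := by
  refine ⟨fun h => by simpa [toMatrix] using congr($h 0 0), fun h => ?_⟩
  ext r c
  fin_cases r <;> fin_cases c <;> simp [toMatrix, AddChar.map_neg_eq_inv, h]

theorem toMatrix_xa_ne_one (i : ZMod (2 * n)) : toMatrix ψ (xa i) ≠ 1 :=
  fun h => by simpa [toMatrix] using congr($h 0 0)

end TwoDimRep

section Codegrees

variable {n : ℕ}

theorem mem_repKer_twoDimRep (ψ : AddChar (ZMod (2 * n)) ℂ) (g : QuaternionGroup n) :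
    g ∈ repKer _ (FDRep.of (twoDimRep ψ)) ↔ ∃ i, ψ i = 1 ∧ a i = g := by
  rw [mem_repKer_iff, FDRep.of_ρ', twoDimRep_eq_one_iff]
  rcases g with i | i
  · simp [toMatrix_a_eq_one_iff]
  · simp [toMatrix_xa_ne_one]

theorem finrank_twoDimRep (ψ : AddChar (ZMod (2 * n)) ℂ) :
    Module.finrank ℂ (FDRep.of (twoDimRep ψ)) = 2 :=
  Module.finrank_fin_fun ℂ

theorem cod_twoDimRep (ψ : AddChar (ZMod (2 * n)) ℂ) :
    cod _ (FDRep.of (twoDimRep ψ)) = (repKer _ (FDRep.of (twoDimRep ψ))).index / 2 := by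
  rw [cod, finrank_twoDimRep]

theorem cod_twoDimRep_mem_ncodSet (ψ : AddChar (ZMod (2 * n)) ℂ) (hψ : ψ 1 ≠ ψ (-1)) :
    cod _ (FDRep.of (twoDimRep ψ)) ∈ ncodSet (QuaternionGroup n) :=
  ⟨_, by rw [FDRep.simple_iff_isIrreducible, FDRep.of_ρ']; exact isIrreducible_twoDimRep ψ hψ,
    by rw [finrank_twoDimRep]; norm_num, rfl⟩

theorem cod_twoDimRep_stdAddChar [NeZero n] :
    cod _ (FDRep.of (twoDimRep (ZMod.stdAddChar (N := 2 * n)))) = 2 * n := by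
  have hker : repKer _ (FDRep.of (twoDimRep (ZMod.stdAddChar (N := 2 * n)))) = ⊥ := by
    ext g
    rw [mem_repKer_twoDimRep, Subgroup.mem_bot]
    constructor
    · rintro ⟨i, hi, rfl⟩
      rw [(ZMod.stdAddChar_eq_one_iff i).mp hi, a_zero]
    · rintro rfl
      exact ⟨0, AddChar.map_zero_eq_one _, a_zero⟩
  rw [cod_twoDimRep, hker, Subgroup.index_bot, Nat.card_eq_fintype_card, QuaternionGroup.card]
  omega

theorem cod_twoDimRep_mulShift_two [NeZero n] :
    cod _ (FDRep.of (twoDimRep ((ZMod.stdAddChar (N := 2 * n)).mulShift 2))) = n := by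
  set K := repKer _ (FDRep.of (twoDimRep ((ZMod.stdAddChar (N := 2 * n)).mulShift 2)))
  have hK : (K : Set (QuaternionGroup n)) = {1, a n} := by
    ext g
    rw [SetLike.mem_coe, mem_repKer_twoDimRep]
    simp only [AddChar.mulShift_apply, ZMod.stdAddChar_eq_one_iff, ZMod.two_mul_eq_zero_iff]
    constructor
    · rintro ⟨i, rfl | rfl, rfl⟩
      exacts [Or.inl a_zero, Or.inr rfl]
    · rintro (rfl | rfl)
      exacts [⟨0, Or.inl rfl, a_zero⟩, ⟨n, Or.inr rfl, rfl⟩]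
  have han : (1 : QuaternionGroup n) ≠ a n := by
    rw [one_def, Ne, a.injEq, eq_comm, ZMod.natCast_eq_zero_iff]
    exact fun h => NeZero.ne n (Nat.eq_zero_of_dvd_of_lt h (by have := NeZero.pos n; omega))
  have hcard : Nat.card K = 2 := by
    rw [← SetLike.coe_sort_coe, hK, Nat.card_coe_set_eq, Set.ncard_pair han]
  have hindex := K.card_mul_index
  rw [hcard, Nat.card_eq_fintype_card, QuaternionGroup.card] at hindex
  rw [cod_twoDimRep]
  change K.index / 2 = n
  omega

theorem two_mul_mem_ncodSet (hn : 2 ≤ n) : 2 * n ∈ ncodSet (QuaternionGroup n) := by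
  have : NeZero n := ⟨by omega⟩
  have hψ : ZMod.stdAddChar (N := 2 * n) 1 ≠ ZMod.stdAddChar (N := 2 * n) (-1) := by
    refine ZMod.injective_stdAddChar.ne ?_
    simpa using ZMod.natCast_ne_neg_natCast (N := 2 * n) one_pos (by omega)
  simpa only [cod_twoDimRep_stdAddChar] using cod_twoDimRep_mem_ncodSet _ hψ

theorem self_mem_ncodSet (hn : 3 ≤ n) : n ∈ ncodSet (QuaternionGroup n) := by
  have : NeZero n := ⟨by omega⟩
  have hψ : (ZMod.stdAddChar (N := 2 * n)).mulShift 2 1 ≠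
      (ZMod.stdAddChar (N := 2 * n)).mulShift 2 (-1) := by
    simp only [AddChar.mulShift_apply, mul_one, mul_neg]
    refine ZMod.injective_stdAddChar.ne ?_
    simpa using ZMod.natCast_ne_neg_natCast (N := 2 * n) two_pos (by omega)
  simpa only [cod_twoDimRep_mulShift_two] using cod_twoDimRep_mem_ncodSet _ hψ

end Codegrees

section QuaternionGroupTwo

theorem sq_eq_a_two_or_eq (g : QuaternionGroup 2) (hg : g ≠ 1) : g ^ 2 = a 2 ∨ g = a 2 := by
  revert g
  decide

theorem mul_eq_or_eq_mul_a_two (g h : QuaternionGroup 2) :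
    g * h = h * g ∨ g * h = h * g * a 2 := by
  revert g h
  decide

theorem injective_of_isIrreducible_of_one_lt_finrank {k V : Type*} [Field k] [IsAlgClosed k]
    [AddCommGroup V] [Module k V] [FiniteDimensional k V]
    {ρ : Representation k (QuaternionGroup 2) V}
    (hρ : ρ.IsIrreducible) (hV : 1 < Module.finrank k V) : Function.Injective ρ := by
  refine (injective_iff_map_eq_one ρ).mpr fun g hg => ?_
  by_contra hg1
  have hz : ρ (a 2) = 1 := by
    rcases sq_eq_a_two_or_eq g hg1 with h | h
    · rw [← h, map_pow, hg, one_pow]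
    · rwa [← h]
  refine hV.ne' (hρ.finrank_eq_one_of_commute fun x y => ?_)
  rcases mul_eq_or_eq_mul_a_two x y with h | h
  · exact (map_mul ρ x y).symm.trans (by rw [h, map_mul])
  · exact (map_mul ρ x y).symm.trans (by rw [h, map_mul, hz, mul_one, map_mul])

theorem cod_eq_four_of_one_lt_finrank (V : FDRep ℂ (QuaternionGroup 2)) (hV : Simple V)
    (hd : 1 < Module.finrank ℂ V) : cod _ V = 4 := by
  rw [FDRep.simple_iff_isIrreducible] at hV
  have hker : repKer _ V = ⊥ := by
    ext g
    rw [mem_repKer_iff, Subgroup.mem_bot,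
      map_eq_one_iff _ (injective_of_isIrreducible_of_one_lt_finrank hV hd)]
  have hdim : Module.finrank ℂ V = 2 := le_antisymm (finrank_le_two hV) hd
  rw [cod, hker, Subgroup.index_bot, hdim, Nat.card_eq_fintype_card, QuaternionGroup.card]

theorem ncodSet_two : ncodSet (QuaternionGroup 2) = {4} := by
  ext c
  constructor
  · rintro ⟨V, hV, hd, rfl⟩
    exact cod_eq_four_of_one_lt_finrank V hV hd
  · rintro rfl
    exact two_mul_mem_ncodSet le_rfl

end QuaternionGroupTwo

end QuaternionGroup

/-- for the generalized quaternion group of order `2^k` (`k ≥ 3`),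
the set of nonlinear irreducible character codegrees is a singleton iff `k = 3`. -/
theorem ncodSet_quaternion_singleton_iff
    (k : ℕ) (hk : 3 ≤ k) :
    (∃ c : ℕ, ncodSet (QuaternionGroup (2 ^ (k - 2))) = {c}) ↔ k = 3 := by
  constructor
  · rintro ⟨c, hc⟩
    by_contra hk3
    have hn : 4 ≤ 2 ^ (k - 2) := Nat.pow_le_pow_right two_pos (by omega : 2 ≤ k - 2)
    have h₁ := QuaternionGroup.two_mul_mem_ncodSet (n := 2 ^ (k - 2)) (by omega)
    have h₂ := QuaternionGroup.self_mem_ncodSet (n := 2 ^ (k - 2)) (by omega)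
    rw [hc, Set.mem_singleton_iff] at h₁ h₂
    omega
  · rintro rfl
    exact ⟨4, QuaternionGroup.ncodSet_two⟩
end

section
/- Let G = P ⋊ R with P a Sylow p-subgroup and R a Hall p'-subgroup, and let N < P be a minimal normal subgroup of G such that G/N is a Frobenius group with kernel P/N. If N is not a direct factor of P, then for each irreducible character χ of G whose kernel does not contain N, the order of ker χ is coprime to |R|. -/
open CategoryTheory

/-! Let `K` be the kernel of the representation. By minimality `N ⊓ K = ⊥`. In the Frobenius
group `G/N`, whose kernel `P/N` is a normal Sylow `p`-subgroup, a normal subgroup not contained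
in the kernel contains an element of prime order `r ≠ p`; a conjugate of it lies in a Frobenius
complement, acts without fixed points on the kernel, and so its commutators with the kernel
exhaust it. Hence either `KN/N ≤ P/N`, making `K` a `p`-group, or `P ≤ KN`, and then `P ⊓ K`
is a direct factor of `P` complementing `N`, which is excluded. -/

open Pointwise

namespace Subgroup

variable {G : Type*} [Group G]

theorem le_of_mem_of_fixedPointFree_conj [Finite G] {F M : Subgroup G} [F.Normal] [M.Normal]
    {q : G} (hqM : q ∈ M) (hq : ∀ n ∈ F, q * n = n * q → n = 1) : F ≤ M := by
  -- The commutator map `n ↦ n⁻¹ * q * n * q⁻¹` embeds `F` into `M ⊓ F`.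
  let f : F → ↥(M ⊓ F) := fun n =>
    ⟨(n : G)⁻¹ * q * n * q⁻¹, mem_inf.mpr
      ⟨mul_mem (Normal.conj_mem' ‹_› q hqM n) (inv_mem hqM),
        by simpa [mul_assoc] using mul_mem (inv_mem n.2) (Normal.conj_mem ‹_› _ n.2 q)⟩⟩
  have hf : Function.Injective f := by
    intro n n' hnn'
    have e : (n : G)⁻¹ * q * n * q⁻¹ = (n' : G)⁻¹ * q * n' * q⁻¹ :=
      congrArg Subtype.val hnn'
    have hcomm : q * ((n' : G) * (n : G)⁻¹) = (n' : G) * (n : G)⁻¹ * q := by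
      calc q * ((n' : G) * (n : G)⁻¹)
          = n' * ((n' : G)⁻¹ * q * n' * q⁻¹) * q * (n : G)⁻¹ := by group
        _ = n' * ((n : G)⁻¹ * q * n * q⁻¹) * q * (n : G)⁻¹ := by rw [e]
        _ = (n' : G) * (n : G)⁻¹ * q := by group
    have := hq _ (mul_mem n'.2 (inv_mem n.2)) hcomm
    exact Subtype.ext (mul_inv_eq_one.mp this).symm
  have hMF := eq_of_le_of_card_ge inf_le_right (Nat.card_le_card_of_injective f hf)
  exact hMF ▸ inf_le_left

theorem exists_conj_mem_of_not_dvd_index [Finite G] {C : Subgroup G} {r : ℕ} [Fact r.Prime]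
    (hC : ¬ r ∣ C.index) {q : G} (hq : IsPGroup r (zpowers q)) :
    ∃ g : G, g⁻¹ * q * g ∈ C := by
  obtain ⟨S⟩ : Nonempty (Sylow r C) := inferInstance
  -- a Sylow subgroup of `C` is one of `G`, and `zpowers q` lies in a conjugate of it
  let S' : Sylow r G := (S.2.map C.subtype).toSylow <| by
    rw [index_map_subtype]
    exact (Fact.out : r.Prime).prime.not_dvd_mul S.not_dvd_index hC
  obtain ⟨T, hqT⟩ := hq.exists_le_sylow
  obtain ⟨g, rfl⟩ := MulAction.exists_smul_eq G S' T
  refine ⟨g, map_subtype_le (S : Subgroup C) ?_⟩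
  have := hqT (mem_zpowers q)
  rw [Sylow.coe_subgroup_smul, mem_pointwise_smul_iff_inv_smul_mem] at this
  simpa [S', mul_assoc] using this

end Subgroup

theorem IsMinimalNormal.inf_eq_bot_of_not_le {G : Type} [Group G] {N K : Subgroup G}
    (hN : IsMinimalNormal G N) [K.Normal] (hNK : ¬ N ≤ K) : N ⊓ K = ⊥ := by
  have := hN.1
  by_contra h
  exact hNK (hN.2.2 _ inferInstance h inf_le_left ▸ inf_le_right)

theorem IsPGroup.not_dvd_card_of_ne {H : Type*} [Group H] [Finite H] {p r : ℕ}
    [hp : Fact p.Prime] (hr : r.Prime) (hrp : r ≠ p) (hH : IsPGroup p H) :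
    ¬ r ∣ Nat.card H := by
  obtain ⟨k, hk⟩ := hH.exists_card_eq
  rw [hk]
  exact fun h => hrp ((Nat.prime_dvd_prime_iff_eq hr hp.out).mp (hr.dvd_of_dvd_pow h))

theorem IsFrobeniusWith.le_of_not_le {G : Type} [Group G] [Finite G] {F C M : Subgroup G}
    (hfr : IsFrobeniusWith G F C) {p : ℕ} [Fact p.Prime] (hF : IsPGroup p F)
    (hFidx : ¬ p ∣ F.index) [M.Normal] (hMF : ¬ M ≤ F) : F ≤ M := by
  have := hfr.normal
  -- every normal `p`-subgroup lies in the normal Sylow subgroup `F`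
  obtain ⟨r, hr, hrp, hrM⟩ : ∃ r, r.Prime ∧ r ≠ p ∧ r ∣ Nat.card M := by
    by_contra! h
    refine hMF (IsPGroup.le_sylow_of_normal ?_ (hF.toSylow hFidx))
    exact IsPGroup.of_card <| Nat.eq_prime_pow_of_unique_prime_dvd Nat.card_pos.ne'
      fun hd hdvd => by_contra fun hne => h _ hd hne hdvd
  have := Fact.mk hr
  obtain ⟨q, hq⟩ := exists_prime_orderOf_dvd_card' r hrM
  have hrC : ¬ r ∣ C.index := by
    rw [hfr.compl.index_eq_card]
    exact hF.not_dvd_card_of_ne hr hrp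
  obtain ⟨g, hg⟩ := Subgroup.exists_conj_mem_of_not_dvd_index hrC (q := q) <|
    IsPGroup.of_card (n := 1) (by rw [Nat.card_zpowers, Subgroup.orderOf_coe, hq, pow_one])
  have hg1 : g⁻¹ * q * g ≠ 1 := fun h => hr.one_lt.ne' <| hq ▸ orderOf_eq_one_iff.mpr
    (Subtype.ext ((conj_eq_one_iff (a := g⁻¹)).mp (by rwa [inv_inv])))
  refine Subgroup.le_of_mem_of_fixedPointFree_conj (q := g⁻¹ * q * g) ?_
    fun n hn hcomm => by_contra fun hn1 => hfr.frob _ hg hg1 n hn hn1 hcomm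
  simpa using Subgroup.Normal.conj_mem' ‹M.Normal› _ q.2 g

theorem Subgroup.exists_commuting_complement_of_le_sup {G : Type*} [Group G]
    {N K P : Subgroup G} [N.Normal] [K.Normal] (hNK : N ⊓ K = ⊥) (hNP : N ≤ P)
    (hP : P ≤ K ⊔ N) :
    ∃ L : Subgroup G, L ≤ P ∧ N ⊓ L = ⊥ ∧ N ⊔ L = P ∧ ∀ x ∈ N, ∀ y ∈ L, x * y = y * x := by
  refine ⟨P ⊓ K, inf_le_left, eq_bot_mono (inf_le_inf_left N inf_le_right) hNK, ?_,
    fun x hx y hy =>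
      commute_of_normal_of_disjoint N K ‹_› ‹_› (disjoint_iff.mpr hNK) x y hx hy.2⟩
  -- Dedekind's modular law: `(P ⊓ K) N = P ∩ K N = P`
  rw [sup_comm]
  apply SetLike.coe_injective
  rw [mul_normal, inf_mul_assoc P K N hNP, ← mul_normal, Set.inter_eq_left.mpr hP]

theorem le_or_le_sup_of_isFrobeniusWith_quotient {G : Type} [Group G] [Finite G] {p : ℕ}
    [Fact p.Prime] {P N : Subgroup G} [N.Normal] (hP : IsPGroup p P) (hPidx : ¬ p ∣ P.index)
    (hNP : N ≤ P) {C : Subgroup (G ⧸ N)}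
    (hfr : IsFrobeniusWith (G ⧸ N) (P.map (QuotientGroup.mk' N)) C)
    (K : Subgroup G) [hK : K.Normal] : K ≤ P ∨ P ≤ K ⊔ N := by
  set π := QuotientGroup.mk' N
  have hsurj : Function.Surjective π := QuotientGroup.mk'_surjective N
  have hcomap (H : Subgroup G) : (H.map π).comap π = H ⊔ N := by
    rw [Subgroup.comap_map_eq, QuotientGroup.ker_mk']
  by_cases hKP : K.map π ≤ P.map π
  · left
    rwa [Subgroup.map_le_iff_le_comap, hcomap, sup_of_le_left hNP] at hKP
  · right
    have := hK.map π hsurj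
    have hidx : ¬ p ∣ (P.map π).index := by
      rwa [P.index_map_eq hsurj (by rwa [QuotientGroup.ker_mk'])]
    have hPK := Subgroup.comap_mono (f := π) (hfr.le_of_not_le (hP.map π) hidx hKP)
    rwa [hcomap, hcomap, sup_of_le_left hNP] at hPK

theorem ker_coprime_hall_of_not_direct_factor_general
    (G : Type) [Group G] [Finite G] (p : ℕ) (hp : p.Prime)
    (P R N : Subgroup G) [N.Normal]
    (hPp : IsPGroup p P) (hcompl : P.IsComplement' R) (hRp : ¬ p ∣ Nat.card R)
    (hNmin : IsMinimalNormal G N) (hNP : N < P)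
    (hquot : ∃ C : Subgroup (G ⧸ N),
      IsFrobeniusWith (G ⧸ N) (P.map (QuotientGroup.mk' N)) C)
    (hnd : ¬ ∃ L : Subgroup G, L ≤ P ∧ N ⊓ L = ⊥ ∧ N ⊔ L = P ∧
      ∀ x ∈ N, ∀ y ∈ L, x * y = y * x)
    (V : FDRep ℂ G) (hker : ¬ N ≤ repKer G V) :
    Nat.Coprime (Nat.card (repKer G V)) (Nat.card R) := by
  have := Fact.mk hp
  set K := repKer G V
  have hK : K.Normal := MonoidHom.normal_ker _
  have hNK : N ⊓ K = ⊥ := hNmin.inf_eq_bot_of_not_le hker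
  obtain ⟨C, hC⟩ := hquot
  have hKP : K ≤ P :=
    (le_or_le_sup_of_isFrobeniusWith_quotient hPp (hcompl.symm.index_eq_card ▸ hRp) hNP.le hC
      K).resolve_right
      fun hPK => hnd (Subgroup.exists_commuting_complement_of_le_sup hNK hNP.le hPK)
  obtain ⟨k, hk⟩ := (hPp.to_le hKP).exists_card_eq
  rw [hk]
  exact (hp.coprime_iff_not_dvd.mpr hRp).pow_left k

/-- Lemma 2.11(1). -/
theorem ker_coprime_hall_of_not_direct_factor
    (G : Type) [Group G] [Finite G] (p : ℕ) (hp : p.Prime)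
    (P R N : Subgroup G) [P.Normal] [N.Normal]
    (hPp : IsPGroup p P) (hcompl : P.IsComplement' R) (hRp : ¬ p ∣ Nat.card R)
    (hNmin : IsMinimalNormal G N) (hNP : N < P)
    (hquot : ∃ C : Subgroup (G ⧸ N),
      IsFrobeniusWith (G ⧸ N) (P.map (QuotientGroup.mk' N)) C)
    (hnd : ¬ ∃ L : Subgroup G, L ≤ P ∧ N ⊓ L = ⊥ ∧ N ⊔ L = P ∧
      ∀ x ∈ N, ∀ y ∈ L, x * y = y * x)
    (V : FDRep ℂ G) (hV : Simple V) (hker : ¬ N ≤ repKer G V) :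
    Nat.Coprime (Nat.card (repKer G V)) (Nat.card R) :=
  ker_coprime_hall_of_not_direct_factor_general G p hp P R N hPp hcompl hRp hNmin hNP hquot hnd V
    hker
end
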